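/- Let T be a terrain and let g ∈ T lie in the interior int(e_i) of the edge e_i. Then every point p ∈ T with x(p) ≥ x(g) that is seen by g is also seen by the left endpoint v_i of e_i; symmetrically, every point p ∈ T with x(p) ≤ x(g) that is seen by g is also seen by the right endpoint v_{i+1} of e_i. -/

import Mathlib

open Set

/-- A terrain: `n ≥ 2` vertices `v 0, …, v (n-1)` in `ℝ²` with strictly
increasing `x`-coordinates. -/
structure Terrain where
  n : ℕ
  hn : 2 ≤ n
  v : ℕ → ℝ × ℝ
  mono : ∀ i j : ℕ, i < j → j < n → (v i).1 < (v j).1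

namespace Terrain

/-- The edge `e_i = [v_i, v_{i+1}]` (meaningful for `i + 1 < n`). -/
def edge (T : Terrain) (i : ℕ) : Set (ℝ × ℝ) := segment ℝ (T.v i) (T.v (i + 1))

/-- The terrain as a subset of `ℝ²`: the union of its edges. -/
def carrier (T : Terrain) : Set (ℝ × ℝ) := ⋃ i ∈ Finset.range (T.n - 1), T.edge i

/-- The interior of the edge `e_i`: the edge minus its two endpoints. -/
def intEdge (T : Terrain) (i : ℕ) : Set (ℝ × ℝ) := T.edge i \ {T.v i, T.v (i + 1)}

/-- `p` sees `q` iff every point of the segment `[p, q]` is nowhere strictly below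
the terrain, i.e. every point of the segment lies on or above the terrain point
with the same `x`-coordinate. -/
def sees (T : Terrain) (p q : ℝ × ℝ) : Prop :=
  ∀ z ∈ segment ℝ p q, ∀ t ∈ T.carrier, t.1 = z.1 → t.2 ≤ z.2

/-- The visibility region `V(p) = {q ∈ T : p sees q}`. -/
def vis (T : Terrain) (p : ℝ × ℝ) : Set (ℝ × ℝ) := {q ∈ T.carrier | T.sees p q}

/-- `V(C) = ⋃_{g ∈ C} V(g)`. -/
def visSet (T : Terrain) (C : Set (ℝ × ℝ)) : Set (ℝ × ℝ) := ⋃ g ∈ C, T.vis g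

/-- `C ⊆ T` is a cover of the terrain iff `V(C) = T`. -/
def IsCover (T : Terrain) (C : Set (ℝ × ℝ)) : Prop :=
  C ⊆ T.carrier ∧ T.visSet C = T.carrier

/-- The vertex set `V = {v_1, …, v_n}`. -/
def vertexSet (T : Terrain) : Set (ℝ × ℝ) := {p | ∃ i < T.n, p = T.v i}

/-- Edge `e_i` is critical w.r.t. `g ∈ C`: `C \ {g}` covers some part of,
but not all of, `int(e_i)`. -/
def IsCriticalWrt (T : Terrain) (C : Set (ℝ × ℝ)) (g : ℝ × ℝ) (i : ℕ) : Prop :=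
  (T.visSet (C \ {g}) ∩ T.intEdge i).Nonempty ∧ ¬ T.intEdge i ⊆ T.visSet (C \ {g})

/-- `g` is a left-guard of `e_i`: `x(g) < x(v_i)` and `e_i` is critical w.r.t. `g`. -/
def IsLeftGuard (T : Terrain) (C : Set (ℝ × ℝ)) (g : ℝ × ℝ) (i : ℕ) : Prop :=
  g.1 < (T.v i).1 ∧ T.IsCriticalWrt C g i

/-- `g` is a right-guard of `e_i`: `x(v_{i+1}) < x(g)` and `e_i` is critical w.r.t. `g`. -/
def IsRightGuard (T : Terrain) (C : Set (ℝ × ℝ)) (g : ℝ × ℝ) (i : ℕ) : Prop :=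
  (T.v (i + 1)).1 < g.1 ∧ T.IsCriticalWrt C g i

/-- `q` is extremal in `V(p)`: `q ∈ V(p)` and `q` has maximal or minimal
`x`-coordinate within its connected component of `V(p)`. -/
def Extremal (T : Terrain) (p q : ℝ × ℝ) : Prop :=
  q ∈ T.vis p ∧
    ((∀ r ∈ connectedComponentIn (T.vis p) q, r.1 ≤ q.1) ∨
     (∀ r ∈ connectedComponentIn (T.vis p) q, q.1 ≤ r.1))

/-- The guard candidate set `U`: all vertices together with the extremal points
of the vertices' visibility regions. -/
def Uset (T : Terrain) : Set (ℝ × ℝ) :=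
  T.vertexSet ∪ ⋃ i ∈ Finset.range T.n, {q | T.Extremal (T.v i) q}

/-- `OPT(G, W)`: the minimum cardinality of a finite `C ⊆ G` with `W ⊆ V(C)`. -/
noncomputable def OPT (T : Terrain) (G W : Set (ℝ × ℝ)) : ℕ :=
  sInf {k | ∃ C : Finset (ℝ × ℝ), ↑C ⊆ G ∧ W ⊆ T.visSet ↑C ∧ C.card = k}

end Terrain

/-!
Write `a = v_i`, `b = v_{i+1}`. If `g ∈ int(e_i)` sees `p` with `x(p) ≥ x(g)`, then `p` lies on or
above the line `ab`: either `x(p) ≤ x(b)` and `p` is above the edge itself, or the segment `[g, p]`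
passes above `b`. Hence the segment `[a, p]` lies above `e_i` for `x ≤ x(g)`, where the terrain is
`e_i`, and above `[g, p]` for `x ≥ x(g)`, where `[g, p]` is above the terrain. The statement for
`v_{i+1}` is the mirror image under `(x, y) ↦ (-x, y)`.
-/

/-- The planar cross product `(b - a) × (z - a)`: nonnegative iff `z` lies on or to the left of
the directed line `a → b`. -/
def cross (a b z : ℝ × ℝ) : ℝ := (b.1 - a.1) * (z.2 - a.2) - (z.1 - a.1) * (b.2 - a.2)

section Plane

variable {a b g p w z : ℝ × ℝ}

@[simp]
lemma cross_self_left (a b : ℝ × ℝ) : cross a b a = 0 := by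
  simp [cross]

@[simp]
lemma cross_self_right (a b : ℝ × ℝ) : cross a b b = 0 := by
  simp only [cross]; ring

lemma cross_nonneg_of_mem_segment {x y : ℝ × ℝ} (hx : 0 ≤ cross a b x) (hy : 0 ≤ cross a b y)
    (hz : z ∈ segment ℝ x y) : 0 ≤ cross a b z := by
  obtain ⟨α, β, hα, hβ, hαβ, rfl⟩ := hz
  have : cross a b (α • x + β • y) = α * cross a b x + β * cross a b y := by
    obtain rfl : α = 1 - β := by linarith
    simp only [cross, Prod.fst_add, Prod.snd_add, Prod.smul_fst, Prod.smul_snd, smul_eq_mul]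
    ring
  rw [this]
  positivity

lemma cross_smul_add_smul_left {α β : ℝ} (hαβ : α + β = 1) :
    cross (α • a + β • b) p a = β * cross a b p := by
  obtain rfl : α = 1 - β := by linarith
  simp only [cross, Prod.fst_add, Prod.snd_add, Prod.smul_fst, Prod.smul_snd, smul_eq_mul]
  ring

lemma cross_smul_add_smul_right {α β : ℝ} (hαβ : α + β = 1) :
    cross (α • a + β • b) p b = -α * cross a b p := by
  obtain rfl : α = 1 - β := by linarith
  simp only [cross, Prod.fst_add, Prod.snd_add, Prod.smul_fst, Prod.smul_snd, smul_eq_mul]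
  ring

lemma image_fst_segment (a b : ℝ × ℝ) : Prod.fst '' segment ℝ a b = uIcc a.1 b.1 := by
  rw [← segment_eq_uIcc]
  exact image_segment ℝ (LinearMap.fst ℝ ℝ ℝ).toAffineMap a b

lemma fst_mem_Ioo_of_mem_openSegment (hab : a.1 < b.1) (hg : g ∈ openSegment ℝ a b) :
    g.1 ∈ Ioo a.1 b.1 := by
  rw [← openSegment_eq_Ioo hab]
  exact image_openSegment ℝ (LinearMap.fst ℝ ℝ ℝ).toAffineMap a b ▸ mem_image_of_mem _ hg

lemma exists_mem_segment_fst_eq {x : ℝ} (hx : x ∈ uIcc a.1 b.1) :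
    ∃ w ∈ segment ℝ a b, w.1 = x := by
  rwa [← image_fst_segment] at hx

lemma cross_eq_of_mem_segment (hw : w ∈ segment ℝ a b) (hz : z.1 = w.1) :
    cross a b z = (b.1 - a.1) * (z.2 - w.2) := by
  obtain ⟨α, β, -, -, hαβ, rfl⟩ := hw
  obtain rfl : α = 1 - β := by linarith
  simp only [Prod.fst_add, Prod.snd_add, Prod.smul_fst, Prod.smul_snd, smul_eq_mul] at hz ⊢
  unfold cross
  linear_combination (a.2 - b.2) * hz

lemma snd_le_iff_cross_nonneg (hab : a.1 < b.1) (hw : w ∈ segment ℝ a b) (hz : z.1 = w.1) :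
    w.2 ≤ z.2 ↔ 0 ≤ cross a b z := by
  rw [cross_eq_of_mem_segment hw hz, mul_nonneg_iff_of_pos_left (sub_pos.2 hab), sub_nonneg]

lemma snd_eq_of_mem_segment (hab : a.1 ≠ b.1) (hz : z ∈ segment ℝ a b)
    (hw : w ∈ segment ℝ a b) (h : z.1 = w.1) : z.2 = w.2 := by
  have := cross_eq_of_mem_segment hw h
  rw [cross_eq_of_mem_segment hz rfl, sub_self, mul_zero, eq_comm, mul_eq_zero,
    sub_eq_zero, sub_eq_zero] at this
  exact this.resolve_left (Ne.symm hab)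

end Plane

def IsAbove (S : Set (ℝ × ℝ)) (z : ℝ × ℝ) : Prop := ∀ t ∈ S, t.1 = z.1 → t.2 ≤ z.2

def SeesOver (S : Set (ℝ × ℝ)) (p q : ℝ × ℝ) : Prop := ∀ z ∈ segment ℝ p q, IsAbove S z

lemma IsAbove.of_snd_le {S : Set (ℝ × ℝ)} {y z : ℝ × ℝ} (hy : IsAbove S y) (hx : y.1 = z.1)
    (h : y.2 ≤ z.2) : IsAbove S z := fun t ht htz => (hy t ht (htz.trans hx.symm)).trans h

section EdgeVisibility

variable {S : Set (ℝ × ℝ)} {a b g p : ℝ × ℝ}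

lemma cross_nonneg_of_seesOver (hab : a.1 < b.1) (hedge : segment ℝ a b ⊆ S)
    (hg : g ∈ openSegment ℝ a b) (hx : g.1 ≤ p.1) (hsee : SeesOver S g p) :
    0 ≤ cross a b p := by
  obtain ⟨hag, hgb⟩ := fst_mem_Ioo_of_mem_openSegment hab hg
  rcases le_or_gt p.1 b.1 with hpb | hbp
  · obtain ⟨w, hw, hwp⟩ := exists_mem_segment_fst_eq (a := a) (b := b)
      (mem_uIcc_of_le (by linarith) hpb)
    exact (snd_le_iff_cross_nonneg hab hw hwp.symm).1
      (hsee p (right_mem_segment ℝ _ p) w (hedge hw) hwp)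
  · obtain ⟨y, hy, hyb⟩ := exists_mem_segment_fst_eq (a := g) (b := p)
      (mem_uIcc_of_le hgb.le hbp.le)
    have hby : b.2 ≤ y.2 := hsee y hy b (hedge (right_mem_segment ℝ a b)) hyb.symm
    have hgpb : cross g p b ≤ 0 := by
      rw [cross_eq_of_mem_segment hy hyb.symm]
      exact mul_nonpos_of_nonneg_of_nonpos (by linarith) (by linarith)
    obtain ⟨α, β, hα, -, hαβ, rfl⟩ := hg
    rw [cross_smul_add_smul_right hαβ] at hgpb
    nlinarith

lemma seesOver_left_of_mem_openSegment (hab : a.1 < b.1) (hedge : segment ℝ a b ⊆ S)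
    (hgraph : ∀ t ∈ S, ∀ w ∈ segment ℝ a b, t.1 = w.1 → t.2 ≤ w.2)
    (hg : g ∈ openSegment ℝ a b) (hx : g.1 ≤ p.1) (hsee : SeesOver S g p) :
    SeesOver S a p := by
  have hp := cross_nonneg_of_seesOver hab hedge hg hx hsee
  obtain ⟨hag, hgb⟩ := fst_mem_Ioo_of_mem_openSegment hab hg
  intro z hz
  have hz1 : z.1 ∈ uIcc a.1 p.1 := image_fst_segment a p ▸ mem_image_of_mem _ hz
  rw [uIcc_of_le (by linarith)] at hz1
  rcases le_or_gt z.1 g.1 with hzg | hgz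
  · obtain ⟨w, hw, hwz⟩ := exists_mem_segment_fst_eq (mem_uIcc_of_le hz1.1 (hzg.trans hgb.le))
    have hwz2 : w.2 ≤ z.2 := (snd_le_iff_cross_nonneg hab hw hwz.symm).2
      (cross_nonneg_of_mem_segment (cross_self_left a b).ge hp hz)
    exact fun t ht htz => (hgraph t ht w hw (htz.trans hwz.symm)).trans hwz2
  · obtain ⟨y, hy, hyz⟩ := exists_mem_segment_fst_eq (mem_uIcc_of_le hgz.le hz1.2)
    have hgpa : 0 ≤ cross g p a := by
      obtain ⟨α, β, -, hβ, hαβ, rfl⟩ := hg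
      rw [cross_smul_add_smul_left hαβ]
      positivity
    have hyz2 : y.2 ≤ z.2 := (snd_le_iff_cross_nonneg (hgz.trans_le hz1.2) hy hyz.symm).2
      (cross_nonneg_of_mem_segment hgpa (cross_self_right g p).ge hz)
    exact (hsee y hy).of_snd_le hyz hyz2

end EdgeVisibility

def reflectX : ℝ × ℝ →ₗ[ℝ] ℝ × ℝ := LinearMap.prodMap (-LinearMap.id) LinearMap.id

section Reflection

variable {S : Set (ℝ × ℝ)} {a b g p q z : ℝ × ℝ}

@[simp]
lemma reflectX_apply (z : ℝ × ℝ) : reflectX z = (-z.1, z.2) := rfl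

lemma image_reflectX_segment (a b : ℝ × ℝ) :
    reflectX '' segment ℝ a b = segment ℝ (reflectX a) (reflectX b) :=
  image_segment ℝ reflectX.toAffineMap a b

lemma image_reflectX_openSegment (a b : ℝ × ℝ) :
    reflectX '' openSegment ℝ a b = openSegment ℝ (reflectX a) (reflectX b) :=
  image_openSegment ℝ reflectX.toAffineMap a b

lemma isAbove_image_reflectX : IsAbove (reflectX '' S) (reflectX z) ↔ IsAbove S z := by
  simp only [IsAbove, forall_mem_image, reflectX_apply, neg_inj]

lemma seesOver_image_reflectX :
    SeesOver (reflectX '' S) (reflectX p) (reflectX q) ↔ SeesOver S p q := by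
  simp only [SeesOver, ← image_reflectX_segment, forall_mem_image, isAbove_image_reflectX]

lemma seesOver_right_of_mem_openSegment (hab : a.1 < b.1) (hedge : segment ℝ a b ⊆ S)
    (hgraph : ∀ t ∈ S, ∀ w ∈ segment ℝ a b, t.1 = w.1 → t.2 ≤ w.2)
    (hg : g ∈ openSegment ℝ a b) (hx : p.1 ≤ g.1) (hsee : SeesOver S g p) :
    SeesOver S b p := by
  rw [← seesOver_image_reflectX] at hsee ⊢
  refine seesOver_left_of_mem_openSegment (b := reflectX a) (g := reflectX g) ?_ ?_ ?_ ?_ ?_ hsee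
  · simpa using hab
  · rw [segment_symm, ← image_reflectX_segment]
    exact image_mono hedge
  · rintro _ ⟨t, ht, rfl⟩ _ hw htw
    rw [segment_symm, ← image_reflectX_segment] at hw
    obtain ⟨w, hw, rfl⟩ := hw
    simp only [reflectX_apply, neg_inj] at htw ⊢
    exact hgraph t ht w hw htw
  · rw [openSegment_symm, ← image_reflectX_openSegment]
    exact mem_image_of_mem _ hg
  · simpa using hx

end Reflection

namespace Terrain

variable (T : Terrain) {i : ℕ} {g t w : ℝ × ℝ}

lemma fst_strictMonoOn : StrictMonoOn (fun i => (T.v i).1) (Iio T.n) :=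
  fun i _ j hj hij => T.mono i j hij hj

lemma fst_lt_fst_succ (hi : i + 1 < T.n) : (T.v i).1 < (T.v (i + 1)).1 :=
  T.mono i (i + 1) i.lt_succ_self hi

lemma mem_carrier : t ∈ T.carrier ↔ ∃ j, j + 1 < T.n ∧ t ∈ T.edge j := by
  simp only [carrier, mem_iUnion, Finset.mem_range, exists_prop]
  refine exists_congr fun j => and_congr_left fun _ => ?_
  have := T.hn
  omega

lemma edge_subset_carrier (hi : i + 1 < T.n) : T.edge i ⊆ T.carrier :=
  fun _ ht => T.mem_carrier.2 ⟨i, hi, ht⟩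

lemma fst_mem_Icc_of_mem_edge (hi : i + 1 < T.n) (ht : t ∈ T.edge i) :
    t.1 ∈ Icc (T.v i).1 (T.v (i + 1)).1 := by
  rw [← uIcc_of_le (T.fst_lt_fst_succ hi).le, ← image_fst_segment]
  exact mem_image_of_mem _ ht

lemma snd_eq_of_fst_eq (ht : t ∈ T.carrier) (hw : w ∈ T.carrier) (h : t.1 = w.1) :
    t.2 = w.2 := by
  obtain ⟨j, hj, htj⟩ := T.mem_carrier.1 ht
  obtain ⟨i, hi, hwi⟩ := T.mem_carrier.1 hw
  wlog hji : j ≤ i generalizing t w i j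
  · exact (this hw ht h.symm i hi hwi j hj htj (by omega)).symm
  rcases hji.eq_or_lt with rfl | hji
  · exact snd_eq_of_mem_segment (T.fst_lt_fst_succ hi).ne htj hwi h
  have hj' : j + 1 ∈ Iio T.n := mem_Iio.2 (by omega)
  have hi' : i ∈ Iio T.n := mem_Iio.2 (by omega)
  have hmono : (T.v (j + 1)).1 ≤ (T.v i).1 := (T.fst_strictMonoOn.le_iff_le hj' hi').2 hji
  have htx := T.fst_mem_Icc_of_mem_edge hj htj
  have hwx := T.fst_mem_Icc_of_mem_edge hi hwi
  have htv : t.1 = (T.v (j + 1)).1 := by linarith [htx.2, hwx.1]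
  have hwv : w.1 = (T.v i).1 := by linarith [htx.2, hwx.1]
  obtain rfl : j + 1 = i := T.fst_strictMonoOn.injOn hj' hi' (htv.symm.trans (h.trans hwv))
  rw [snd_eq_of_mem_segment (T.fst_lt_fst_succ hj).ne htj (right_mem_segment ℝ _ _) htv,
    snd_eq_of_mem_segment (T.fst_lt_fst_succ hi).ne hwi (left_mem_segment ℝ _ _) hwv]

lemma mem_openSegment_of_mem_intEdge (hg : g ∈ T.intEdge i) :
    g ∈ openSegment ℝ (T.v i) (T.v (i + 1)) := by
  simp only [intEdge, mem_sdiff, mem_insert_iff, mem_singleton_iff, not_or] at hg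
  exact mem_openSegment_of_ne_left_right (Ne.symm hg.2.1) (Ne.symm hg.2.2) hg.1

lemma sees_iff_seesOver {p q : ℝ × ℝ} : T.sees p q ↔ SeesOver T.carrier p q := Iff.rfl

end Terrain

/-- For `g` in the interior of edge `e_i`, every point `p ∈ T` with
`x(p) ≥ x(g)` seen by `g` is also seen by the left endpoint `v_i`, and every point
`p ∈ T` with `x(p) ≤ x(g)` seen by `g` is also seen by the right endpoint `v_{i+1}`. -/
theorem edge_interior_guard_dominated_by_endpoints (T : Terrain) (i : ℕ)
    (hi : i + 1 < T.n) (g : ℝ × ℝ) (hg : g ∈ T.intEdge i) :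
    (∀ p ∈ T.carrier, g.1 ≤ p.1 → T.sees g p → T.sees (T.v i) p) ∧
    (∀ p ∈ T.carrier, p.1 ≤ g.1 → T.sees g p → T.sees (T.v (i + 1)) p) := by
  have hab := T.fst_lt_fst_succ hi
  have hedge := T.edge_subset_carrier hi
  have hgraph : ∀ t ∈ T.carrier, ∀ w ∈ T.edge i, t.1 = w.1 → t.2 ≤ w.2 :=
    fun t ht w hw h => (T.snd_eq_of_fst_eq ht (hedge hw) h).le
  have hg' := T.mem_openSegment_of_mem_intEdge hg
  simp only [T.sees_iff_seesOver]
  exact ⟨fun p _ hx => seesOver_left_of_mem_openSegment hab hedge hgraph hg' hx,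
    fun p _ hx => seesOver_right_of_mem_openSegment hab hedge hgraph hg' hx⟩
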